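/- arXiv:1201.5921 — 4 statements merged into one kernel-verified Lean document; each statement's English description precedes it below -/
import Mathlib

section
/- For any finitely generated submodule M = span{g_1, ..., g_m} of Z_{p^r}[x]^q, M equals the p-span of the p-generator sequence (g_1, p·g_1, ..., p^{r-1}·g_1, g_2, p·g_2, ..., p^{r-1}·g_2, ..., g_m, p·g_m, ..., p^{r-1}·g_m). -/
open Polynomial

open scoped Classical

/-- Support of a polynomial vector: monomials `(degree, position)` ordered lexicographically,
which is the term-over-position (top) ordering. -/
noncomputable def vsupp {R : Type*} [CommRing R] {q : ℕ} (f : Fin q → R[X]) :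
    Finset (Lex (ℕ × Fin q)) :=
  Finset.univ.biUnion fun i => (f i).support.image fun α => toLex (α, i)

/-- Leading monomial w.r.t. the top ordering (`⊥` for the zero vector). -/
noncomputable def vlm {R : Type*} [CommRing R] {q : ℕ} (f : Fin q → R[X]) :
    WithBot (Lex (ℕ × Fin q)) := (vsupp f).max

/-- Degree of the leading monomial (junk value `0` for the zero vector). -/
noncomputable def vdeg {R : Type*} [CommRing R] {q : ℕ} (f : Fin q → R[X]) : ℕ :=
  WithBot.unbotD 0 ((vlm f).map fun m => (ofLex m).1)

/-- Leading position. -/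
noncomputable def vlpos {R : Type*} [CommRing R] {q : ℕ} (f : Fin q → R[X]) : WithBot (Fin q) :=
  (vlm f).map fun m => (ofLex m).2

/-- Leading coefficient. -/
noncomputable def vlc {R : Type*} [CommRing R] {q : ℕ} (f : Fin q → R[X]) : R :=
  WithBot.unbotD 0 ((vlm f).map fun m => (f (ofLex m).2).coeff (ofLex m).1)

/-- `c` is a digit: one of `0,1,…,p-1` (as a ring element). -/
def IsDigit {R : Type*} [CommRing R] (p : ℕ) (c : R) : Prop := ∃ t : ℕ, t < p ∧ c = (t : R)

/-- All coefficients of `a` are digits, i.e. `a ∈ A_p[x]`. -/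
def IsDigitPoly {R : Type*} [CommRing R] (p : ℕ) (a : R[X]) : Prop := ∀ n, IsDigit p (a.coeff n)

/-- The p-span: the set of all p-linear combinations of the `v i`. -/
def pSpan {R : Type*} [CommRing R] {q : ℕ} (p : ℕ) {ι : Type*} [Fintype ι]
    (v : ι → Fin q → R[X]) : Set (Fin q → R[X]) :=
  {f | ∃ a : ι → R[X], (∀ i, IsDigitPoly p (a i)) ∧ f = ∑ i, a i • v i}

/-- p-generator sequence: `p • v i` is a p-linear combination of the later elements
(for the last element, `p • v i = 0`). -/
def IsPGenSeq {R : Type*} [CommRing R] {q : ℕ} (p : ℕ) {ι : Type*} [Fintype ι] [LinearOrder ι]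
    (v : ι → Fin q → R[X]) : Prop :=
  ∀ i : ι, ∃ a : ι → R[X], (∀ j, IsDigitPoly p (a j)) ∧ (∀ j, j ≤ i → a j = 0) ∧
    (p : R) • v i = ∑ j, a j • v j

/-- p-linear independence: only the trivial p-linear combination vanishes. -/
def PLinIndep {R : Type*} [CommRing R] {q : ℕ} (p : ℕ) {ι : Type*} [Fintype ι]
    (v : ι → Fin q → R[X]) : Prop :=
  ∀ a : ι → R[X], (∀ i, IsDigitPoly p (a i)) → ∑ i, a i • v i = 0 → ∀ i, a i = 0

/-- The p-Predictable Leading Monomial (p-PLM) property. -/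
def HasPPLM {R : Type*} [CommRing R] {q : ℕ} (p : ℕ) {ι : Type*} [Fintype ι]
    (v : ι → Fin q → R[X]) : Prop :=
  ∀ a : ι → R[X], (∀ i, IsDigitPoly p (a i)) → ∑ i, a i • v i ≠ 0 →
    vlm (∑ i, a i • v i) = (Finset.univ.filter fun i => a i ≠ 0).sup fun i => vlm (a i • v i)

/-! Every `c ∈ ℤ/p^r` has a base-`p` expansion `c = ∑_{l<r} c_l p^l` with digits `c_l ∈ A_p`;
applied coefficientwise, a polynomial `b` splits as `∑_l b_l p^l` with `b_l ∈ A_p[x]`, so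
`b • g_j = ∑_l b_l • (p^l g_j)` is a p-linear combination of the powers. The sequence is a
p-generator sequence because `p • p^l g_j` is the next element `p^(l+1) g_j`, or `0` when
`l = r - 1`. -/

theorem Nat.mod_pow_eq_sum_digits (n p r : ℕ) :
    n % p ^ r = ∑ i ∈ Finset.range r, n / p ^ i % p * p ^ i := by
  induction r with
  | zero => simp [Nat.mod_one]
  | succ r ih => rw [Finset.sum_range_succ, ← ih, Nat.mod_pow_succ, mul_comm]

theorem ZMod.eq_sum_digit_mul_pow {p r : ℕ} [NeZero (p ^ r)] (c : ZMod (p ^ r)) :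
    c = ∑ l : Fin r,
      ((c.val / p ^ (l : ℕ) % p : ℕ) : ZMod (p ^ r)) * (p : ZMod (p ^ r)) ^ (l : ℕ) := by
  conv_lhs => rw [← ZMod.natCast_zmod_val c, ← ZMod.natCast_mod, Nat.mod_pow_eq_sum_digits]
  push_cast
  exact Finset.sum_range fun l => ((c.val / p ^ l % p : ℕ) : ZMod (p ^ r)) * (p : ZMod _) ^ l

theorem isDigitPoly_zero {R : Type*} [CommRing R] {p : ℕ} (hp : 0 < p) :
    IsDigitPoly p (0 : R[X]) :=
  fun _ => ⟨0, hp, by simp⟩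

theorem isDigitPoly_one {R : Type*} [CommRing R] {p : ℕ} (hp : 1 < p) :
    IsDigitPoly p (1 : R[X]) := by
  intro n
  rcases eq_or_ne n 0 with rfl | hn
  · exact ⟨1, hp, by simp⟩
  · exact ⟨0, by omega, by simp [coeff_one, hn]⟩

theorem Polynomial.exists_isDigitPoly_sum_mul_C_pow {p r : ℕ} [NeZero p]
    (b : (ZMod (p ^ r))[X]) :
    ∃ a : Fin r → (ZMod (p ^ r))[X], (∀ l, IsDigitPoly p (a l)) ∧
      b = ∑ l : Fin r, a l * C ((p : ZMod (p ^ r)) ^ (l : ℕ)) := by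
  let digit (l : ℕ) (c : ZMod (p ^ r)) : ZMod (p ^ r) := (c.val / p ^ l % p : ℕ)
  have coeff_digitPoly (l n : ℕ) :
      (∑ k ∈ b.support, monomial k (digit l (b.coeff k))).coeff n = digit l (b.coeff n) := by
    rw [finsetSum_coeff, Finset.sum_eq_single n fun k _ hk => by simp [coeff_monomial, hk]]
    · simp
    · intro hn
      simp [digit, notMem_support_iff.mp hn]
  refine ⟨fun l => ∑ k ∈ b.support, monomial k (digit l (b.coeff k)), ?_, ?_⟩
  · intro l n
    rw [coeff_digitPoly]
    exact ⟨_, Nat.mod_lt _ (NeZero.pos p), rfl⟩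
  · ext n
    simp only [finsetSum_coeff, coeff_mul_C, coeff_digitPoly]
    exact ZMod.eq_sum_digit_mul_pow (b.coeff n)

theorem isPGenSeq_of_smul_eq_zero_or_later {R : Type*} [CommRing R] {q p : ℕ} {ι : Type*}
    [Fintype ι] [LinearOrder ι] (hp : 1 < p) (v : ι → Fin q → R[X])
    (h : ∀ i, (p : R) • v i = 0 ∨ ∃ j, i < j ∧ (p : R) • v i = v j) :
    IsPGenSeq p v := by
  intro i
  rcases h i with hzero | ⟨j, hij, hj⟩
  · exact ⟨0, fun _ => isDigitPoly_zero (by omega), fun _ _ => rfl, by simp [hzero]⟩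
  · refine ⟨Pi.single j 1, fun k => ?_,
      fun k hk => Pi.single_eq_of_ne (hk.trans_lt hij).ne _, ?_⟩
    · rcases eq_or_ne k j with rfl | hk
      · simpa using isDigitPoly_one hp
      · simpa [hk] using isDigitPoly_zero (R := R) (by omega)
    · simp [Pi.single_apply, ite_smul, hj]

noncomputable def pPowerSeq (p r : ℕ) {q : ℕ} {ι : Type*}
    (g : ι → Fin q → (ZMod (p ^ r))[X]) :
    Lex (ι × Fin r) → Fin q → (ZMod (p ^ r))[X] :=
  fun jl => (p : ZMod (p ^ r)) ^ ((ofLex jl).2 : ℕ) • g (ofLex jl).1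

theorem isPGenSeq_pPowerSeq {p r q : ℕ} {ι : Type*} [Fintype ι] [LinearOrder ι] (hp : 1 < p)
    (g : ι → Fin q → (ZMod (p ^ r))[X]) : IsPGenSeq p (pPowerSeq p r g) := by
  refine isPGenSeq_of_smul_eq_zero_or_later hp _ fun jl => ?_
  obtain ⟨⟨j, l⟩, rfl⟩ := toLex.surjective jl
  simp only [pPowerSeq, ofLex_toLex, smul_smul, ← pow_succ']
  by_cases hl : (l : ℕ) + 1 < r
  · refine .inr ⟨toLex (j, ⟨l + 1, hl⟩), ?_, rfl⟩
    exact Prod.Lex.toLex_lt_toLex.mpr (.inr ⟨rfl, by simp [Fin.lt_def]⟩)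
  · left
    rw [show (l : ℕ) + 1 = r by omega, ← Nat.cast_pow, ZMod.natCast_self, zero_smul]

theorem pSpan_subset_span {R : Type*} [CommRing R] {q : ℕ} (p : ℕ) {ι : Type*} [Fintype ι]
    (v : ι → Fin q → R[X]) : pSpan p v ⊆ Submodule.span R[X] (Set.range v) := by
  rintro _ ⟨a, -, rfl⟩
  exact Submodule.sum_mem _ fun i _ => Submodule.smul_mem _ _ (Submodule.subset_span ⟨i, rfl⟩)

theorem span_subset_pSpan_pPowerSeq {p r q : ℕ} [NeZero p] {ι : Type*} [Fintype ι]
    (g : ι → Fin q → (ZMod (p ^ r))[X]) :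
    (Submodule.span (ZMod (p ^ r))[X] (Set.range g) : Set (Fin q → (ZMod (p ^ r))[X])) ⊆
      pSpan p (pPowerSeq p r g) := by
  intro f hf
  obtain ⟨b, rfl⟩ := Submodule.mem_span_range_iff_exists_fun _ |>.mp hf
  choose a ha hb using fun j => exists_isDigitPoly_sum_mul_C_pow (b j)
  refine ⟨fun jl => a (ofLex jl).1 (ofLex jl).2, fun jl => ha _ _, ?_⟩
  rw [← (toLex : ι × Fin r ≃ Lex (ι × Fin r)).sum_comp, Fintype.sum_prod_type]
  refine Finset.sum_congr rfl fun j _ => ?_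
  rw [hb j, Finset.sum_smul]
  refine Finset.sum_congr rfl fun l _ => ?_
  rw [mul_smul, ← algebraMap_eq, algebraMap_smul]
  rfl

theorem span_eq_pSpan_of_powers_general (p r q m : ℕ) (hp : p.Prime)
    (g : Fin m → Fin q → Polynomial (ZMod (p ^ r)))
    (w : Lex (Fin m × Fin r) → Fin q → Polynomial (ZMod (p ^ r)))
    (hw : ∀ jl : Lex (Fin m × Fin r),
      w jl = ((p : ZMod (p ^ r)) ^ ((ofLex jl).2 : ℕ)) • g (ofLex jl).1) :
    IsPGenSeq p w ∧
      (Submodule.span (Polynomial (ZMod (p ^ r))) (Set.range g) :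
        Set (Fin q → Polynomial (ZMod (p ^ r)))) = pSpan p w := by
  have : NeZero p := ⟨hp.ne_zero⟩
  obtain rfl : w = pPowerSeq p r g := funext hw
  refine ⟨isPGenSeq_pPowerSeq hp.one_lt g, (span_subset_pSpan_pPowerSeq g).antisymm ?_⟩
  refine (pSpan_subset_span p _).trans (Submodule.span_le.mpr ?_)
  rintro _ ⟨jl, rfl⟩
  exact Submodule.smul_of_tower_mem _ _ (Submodule.subset_span ⟨_, rfl⟩)

/-- For a finitely generated submodule `M = span{g_1,…,g_m}` of `Z_{p^r}[x]^q`, `M` equals the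
p-span of the p-generator sequence `(g_1, p g_1, …, p^(r-1) g_1, …, g_m, p g_m, …, p^(r-1) g_m)`
(indexed lexicographically by `(j, l) ↦ p^l • g_j`). -/
theorem span_eq_pSpan_of_powers (p r q m : ℕ) (hp : p.Prime) (hr : 0 < r)
    (g : Fin m → Fin q → Polynomial (ZMod (p ^ r)))
    (w : Lex (Fin m × Fin r) → Fin q → Polynomial (ZMod (p ^ r)))
    (hw : ∀ jl : Lex (Fin m × Fin r),
      w jl = ((p : ZMod (p ^ r)) ^ ((ofLex jl).2 : ℕ)) • g (ofLex jl).1) :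
    IsPGenSeq p w ∧
      (Submodule.span (Polynomial (ZMod (p ^ r))) (Set.range g) :
        Set (Fin q → Polynomial (ZMod (p ^ r)))) = pSpan p w :=
  span_eq_pSpan_of_powers_general p r q m hp g w hw
end

section
/- Let M be a 2-dimensional submodule of F[x]^2 with minimal Gröbner basis {g_1, g_2} where g_2 has leading position 2. Then g_2 has minimal leading monomial among all elements of M with leading position 2, and every such minimal element f is of the form f = a_2 g_2 + a_1 g_1 with a_2 a nonzero scalar and a_1 ∈ F[x] satisfying lm(a_1 g_1) ≤ lm(g_2). -/
open Polynomial

open scoped Classical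

/-- Leading term of a polynomial vector, as a polynomial vector. -/
noncomputable def vlt {R : Type*} [CommRing R] {q : ℕ} (f : Fin q → R[X]) : Fin q → R[X] :=
  WithBot.unbotD 0 ((vlm f).map fun m => fun j : Fin q =>
    if j = (ofLex m).2 then C ((f (ofLex m).2).coeff (ofLex m).1) * X ^ (ofLex m).1 else 0)

/-- The leading term submodule `L(F)`. -/
noncomputable def ltSubmodule {R : Type*} [CommRing R] {q : ℕ} (S : Set (Fin q → R[X])) :
    Submodule R[X] (Fin q → R[X]) :=
  Submodule.span R[X] (vlt '' S)

/-- `G` is a Gröbner basis of `M`: `G ⊆ M` and `L(G) = L(M)`. -/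
def IsGroebner {R : Type*} [CommRing R] {q : ℕ} (M : Submodule R[X] (Fin q → R[X]))
    (G : Finset (Fin q → R[X])) : Prop :=
  (G : Set (Fin q → R[X])) ⊆ M ∧
    ltSubmodule (G : Set (Fin q → R[X])) = ltSubmodule (M : Set (Fin q → R[X]))

/-- One-step reduction of `f` to `h` modulo the finite set `Fs` (Adams–Loustaunau Def. 4.1.1). -/
def ReducesOneStep {R : Type*} [CommRing R] {q : ℕ} (Fs : Finset (Fin q → R[X]))
    (f h : Fin q → R[X]) : Prop :=
  f ≠ 0 ∧ ∃ (m : ℕ) (jv : Fin m → Fin q → R[X]) (α : Fin m → ℕ) (β : Fin m → R),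
    0 < m ∧ (∀ i, jv i ∈ Fs) ∧ (∀ i, jv i ≠ 0) ∧ Function.Injective jv ∧ (∀ i, β i ≠ 0) ∧
    (∀ i, vlm f = (vlm (jv i)).map fun mm => toLex (α i + (ofLex mm).1, (ofLex mm).2)) ∧
    vlt f = ∑ i, (C (β i) * X ^ α i) • vlt (jv i) ∧
    h = f - ∑ i, (C (β i) * X ^ α i) • jv i

/-- Minimal Gröbner basis: a Gröbner basis each of whose elements is irreducible
modulo the others. -/
def IsMinimalGroebner {R : Type*} [CommRing R] {q : ℕ} (M : Submodule R[X] (Fin q → R[X]))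
    (G : Finset (Fin q → R[X])) : Prop :=
  IsGroebner M G ∧ ∀ g ∈ G, ∀ h, ¬ ReducesOneStep (G.erase g) g h

/-!
`L(M) = L(G)` means that the leading monomial of every nonzero element of `M` is divisible by
that of some basis element, and minimality of the basis forbids two basis elements whose leading
monomials divide one another; since the ordering compares degrees first, for monomials in the
same position divisibility is just comparison. Hence `g₂` is
minimal among the elements of `M` with leading position 2, and below `lm g₂` only `lm g₁` can
divide leading monomials, so that repeated reduction by `g₁` shows every element of `M` below
`lm g₂` to be a multiple of `g₁`. A minimal `f` has `lm f = lm g₂`, and subtracting the right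
scalar multiple of `g₂` brings it below `lm g₂`.
-/

section CommRing

variable {R : Type*} [CommRing R] {q : ℕ} {M : Submodule R[X] (Fin q → R[X])}
  {G : Finset (Fin q → R[X])} {f g : Fin q → R[X]} {a d e : ℕ} {i j : Fin q}

theorem toLex_le_toLex_of_fst_le (h : e ≤ d) :
    ((toLex (e, j) : Lex (ℕ × Fin q)) : WithBot (Lex (ℕ × Fin q))) ≤ toLex (d, j) :=
  WithBot.coe_le_coe.mpr (Prod.Lex.toLex_mono ⟨h, le_rfl⟩)

theorem mem_vsupp : toLex (a, i) ∈ vsupp f ↔ (f i).coeff a ≠ 0 := by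
  simp [vsupp]

theorem vlm_eq_bot_iff : vlm f = ⊥ ↔ f = 0 := by
  rw [vlm, Finset.max_eq_bot, Finset.eq_empty_iff_forall_notMem, funext_iff]
  constructor
  · intro h i
    ext a
    by_contra hc
    exact h _ (mem_vsupp.mpr hc)
  · rintro h m hm
    obtain ⟨⟨a, i⟩, rfl⟩ := toLex.surjective m
    exact mem_vsupp.mp hm (by simp [h i])

theorem ne_zero_of_vlm_eq (h : vlm f = toLex (d, j)) : f ≠ 0 := fun h0 =>
  WithBot.coe_ne_bot (h.symm.trans (vlm_eq_bot_iff.mpr h0))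

theorem exists_vlm_eq_of_ne_zero (hf : f ≠ 0) : ∃ (d : ℕ) (j : Fin q), vlm f = toLex (d, j) := by
  obtain ⟨m, hm⟩ := WithBot.ne_bot_iff_exists.mp (mt vlm_eq_bot_iff.mp hf)
  obtain ⟨⟨d, j⟩, rfl⟩ := toLex.surjective m
  exact ⟨d, j, hm.symm⟩

theorem exists_vlm_eq_of_vlpos_eq (h : vlpos f = j) : ∃ d : ℕ, vlm f = toLex (d, j) := by
  obtain ⟨m, hm, hmj⟩ := Option.map_eq_some_iff.mp h
  exact ⟨(ofLex m).1, by rw [vlm] at hm ⊢; rw [hm, ← hmj]; rfl⟩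

theorem coeff_ne_zero_of_vlm_eq (h : vlm f = toLex (d, j)) : (f j).coeff d ≠ 0 :=
  mem_vsupp.mp (Finset.mem_of_max h)

theorem le_vlm_of_coeff_ne_zero (h : (f i).coeff a ≠ 0) : toLex (a, i) ≤ vlm f :=
  Finset.le_max (mem_vsupp.mpr h)

theorem vlm_le_of_forall {μ : WithBot (Lex (ℕ × Fin q))}
    (h : ∀ a i, (f i).coeff a ≠ 0 → toLex (a, i) ≤ μ) : vlm f ≤ μ := by
  refine Finset.max_le fun m hm => ?_
  obtain ⟨⟨a, i⟩, rfl⟩ := toLex.surjective m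
  exact h a i (mem_vsupp.mp hm)

theorem vlm_sub_le : vlm (f - g) ≤ max (vlm f) (vlm g) :=
  vlm_le_of_forall fun a i hc => by
    by_cases hf : (f i).coeff a = 0
    · exact le_max_of_le_right
        (le_vlm_of_coeff_ne_zero (by simpa [hf] using hc))
    · exact le_max_of_le_left (le_vlm_of_coeff_ne_zero hf)

theorem vlm_sub_lt (hf : vlm f = toLex (d, j)) (hg : vlm g = toLex (d, j))
    (hc : (f j).coeff d = (g j).coeff d) : vlm (f - g) < toLex (d, j) :=
  lt_of_le_of_ne (vlm_sub_le.trans (by rw [hf, hg, max_self]))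
    fun h => coeff_ne_zero_of_vlm_eq h (by simp [hc])

theorem vlt_eq_single (h : vlm f = toLex (d, j)) :
    vlt f = Pi.single j (C ((f j).coeff d) * X ^ d) := by
  funext i
  by_cases hij : i = j <;> simp [vlt, h, hij]

theorem coeff_monomial_smul_apply (β : R) (α : ℕ) :
    (((C β * X ^ α) • g) i).coeff a = if α ≤ a then β * (g i).coeff (a - α) else 0 := by
  rw [Pi.smul_apply, smul_eq_mul, mul_assoc, coeff_C_mul, coeff_X_pow_mul']
  split_ifs <;> simp

theorem vlm_monomial_smul [NoZeroDivisors R] {β : R} (hβ : β ≠ 0)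
    (hg : vlm g = toLex (e, j)) (α : ℕ) : vlm ((C β * X ^ α) • g) = toLex (α + e, j) := by
  refine le_antisymm (vlm_le_of_forall fun a i hc => ?_) (le_vlm_of_coeff_ne_zero ?_)
  · rw [coeff_monomial_smul_apply] at hc
    split_ifs at hc with hα
    · have := hg ▸ le_vlm_of_coeff_ne_zero (right_ne_zero_of_mul hc)
      rw [WithBot.coe_le_coe, Prod.Lex.toLex_le_toLex] at this ⊢
      dsimp only at this ⊢
      omega
    · exact absurd rfl hc
  · rw [coeff_monomial_smul_apply, if_pos (by omega), Nat.add_sub_cancel_left]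
    exact mul_ne_zero hβ (coeff_ne_zero_of_vlm_eq hg)

theorem exists_vlm_dvd_of_vlt_mem_ltSubmodule {S : Set (Fin q → R[X])}
    (hf : vlm f = toLex (d, j)) (hmem : vlt f ∈ ltSubmodule S) :
    ∃ g ∈ S, ∃ e ≤ d, vlm g = toLex (e, j) := by
  by_contra! hS
  -- otherwise every `vlt g`, hence also `vlt f`, has its `j`-th entry divisible by `X ^ (d + 1)`
  let N : Submodule R[X] (Fin q → R[X]) :=
    Submodule.comap (LinearMap.proj j) (Ideal.span {(X : R[X]) ^ (d + 1)})
  have hN : ltSubmodule S ≤ N := by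
    refine Submodule.span_le.mpr ?_
    rintro _ ⟨g, hg, rfl⟩
    simp only [N, SetLike.mem_coe, Submodule.mem_comap, LinearMap.proj_apply,
      Ideal.mem_span_singleton]
    rcases eq_or_ne g 0 with rfl | hg0
    · simp [vlt, vlm_eq_bot_iff.mpr rfl]
    obtain ⟨e, i, he⟩ := exists_vlm_eq_of_ne_zero hg0
    rw [vlt_eq_single he, Pi.single_apply]
    split_ifs with hij
    · subst hij
      exact (pow_dvd_pow X (lt_of_not_ge fun hed => hS g hg e hed he)).mul_left _
    · exact dvd_zero _
  have hdvd := hN hmem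
  simp only [N, Submodule.mem_comap, LinearMap.proj_apply, Ideal.mem_span_singleton,
    vlt_eq_single hf, Pi.single_eq_same, X_pow_dvd_iff] at hdvd
  exact coeff_ne_zero_of_vlm_eq hf (by simpa using hdvd d (Nat.lt_succ_self d))

theorem IsGroebner.exists_vlm_dvd (hG : IsGroebner M G) (hf : f ∈ M)
    (hfd : vlm f = toLex (d, j)) : ∃ g ∈ G, ∃ e ≤ d, vlm g = toLex (e, j) :=
  exists_vlm_dvd_of_vlt_mem_ltSubmodule hfd (hG.2 ▸ Submodule.subset_span ⟨f, hf, rfl⟩)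

end CommRing

section Field

variable {F : Type*} [Field F] {q : ℕ} {M : Submodule F[X] (Fin q → F[X])}
  {G : Finset (Fin q → F[X])} {f g : Fin q → F[X]} {d e : ℕ} {j : Fin q}

theorem vlt_eq_smul_vlt (hf : vlm f = toLex (d, j)) (hg : vlm g = toLex (e, j)) (hed : e ≤ d) :
    vlt f = (C ((f j).coeff d / (g j).coeff e) * X ^ (d - e)) • vlt g := by
  rw [vlt_eq_single hf, vlt_eq_single hg, ← Pi.single_smul, smul_eq_mul, mul_mul_mul_comm,
    ← C_mul, div_mul_cancel₀ _ (coeff_ne_zero_of_vlm_eq hg), ← pow_add, Nat.sub_add_cancel hed]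

theorem vlm_sub_smul_lt (hf : vlm f = toLex (d, j)) (hg : vlm g = toLex (e, j)) (hed : e ≤ d) :
    vlm (f - (C ((f j).coeff d / (g j).coeff e) * X ^ (d - e)) • g) < vlm f := by
  have hg0 := coeff_ne_zero_of_vlm_eq hg
  have hβ := div_ne_zero (coeff_ne_zero_of_vlm_eq hf) hg0
  have hsmul := vlm_monomial_smul hβ hg (d - e)
  rw [Nat.sub_add_cancel hed] at hsmul
  rw [hf]
  refine vlm_sub_lt hf hsmul ?_
  rw [coeff_monomial_smul_apply, if_pos (Nat.sub_le d e), Nat.sub_sub_self hed,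
    div_mul_cancel₀ _ hg0]

theorem reducesOneStep_of_vlm_dvd {Fs : Finset (Fin q → F[X])} (hf : vlm f = toLex (d, j))
    (hg : vlm g = toLex (e, j)) (hed : e ≤ d) (hgFs : g ∈ Fs) :
    ReducesOneStep Fs f (f - (C ((f j).coeff d / (g j).coeff e) * X ^ (d - e)) • g) := by
  refine ⟨ne_zero_of_vlm_eq hf, 1, fun _ => g, fun _ => d - e,
    fun _ => (f j).coeff d / (g j).coeff e, one_pos, fun _ => hgFs,
    fun _ => ne_zero_of_vlm_eq hg, fun _ _ _ => Subsingleton.elim _ _,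
    fun _ => div_ne_zero (coeff_ne_zero_of_vlm_eq hf) (coeff_ne_zero_of_vlm_eq hg),
    fun _ => ?_, ?_, by rw [Fin.sum_univ_one]⟩
  · rw [hf, hg, WithBot.map_coe, ofLex_toLex, Nat.sub_add_cancel hed]
  · rw [Fin.sum_univ_one, vlt_eq_smul_vlt hf hg hed]

theorem exists_smul_eq_of_vlm_lt (hg : g ∈ M) {μ : WithBot (Lex (ℕ × Fin q))}
    (hdvd : ∀ h ∈ M, ∀ (d : ℕ) (i : Fin q), vlm h = toLex (d, i) → vlm h < μ →
      ∃ e ≤ d, vlm g = toLex (e, i)) :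
    ∀ h ∈ M, vlm h < μ → ∃ a : F[X], h = a • g := by
  suffices ∀ ν, ∀ h ∈ M, vlm h = ν → ν < μ → ∃ a : F[X], h = a • g from
    fun h hh hlt => this _ h hh rfl hlt
  intro ν
  induction ν using WellFoundedLT.induction with
  | _ ν IH =>
    rintro h hh rfl hlt
    rcases eq_or_ne h 0 with rfl | h0
    · exact ⟨0, (zero_smul _ _).symm⟩
    obtain ⟨d, i, hd⟩ := exists_vlm_eq_of_ne_zero h0
    obtain ⟨e, hed, he⟩ := hdvd h hh d i hd hlt
    set t := C ((h i).coeff d / (g i).coeff e) * X ^ (d - e)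
    have hred := vlm_sub_smul_lt hd he hed
    obtain ⟨a, ha⟩ := IH _ hred (h - t • g) (M.sub_mem hh (M.smul_mem t hg)) rfl (hred.trans hlt)
    exact ⟨a + t, by rw [add_smul, ← ha, sub_add_cancel]⟩

theorem IsMinimalGroebner.eq_of_vlm_dvd (hG : IsMinimalGroebner M G) (hfG : f ∈ G) (hgG : g ∈ G)
    (hf : vlm f = toLex (d, j)) (hg : vlm g = toLex (e, j)) (hed : e ≤ d) : f = g := by
  by_contra hfg
  exact hG.2 f hfG _ (reducesOneStep_of_vlm_dvd hf hg hed (Finset.mem_erase.mpr ⟨Ne.symm hfg, hgG⟩))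

theorem IsMinimalGroebner.vlm_le (hG : IsMinimalGroebner M G) (hgG : g ∈ G)
    (hg : vlm g = toLex (e, j)) (hf : f ∈ M) (hfd : vlm f = toLex (d, j)) : vlm g ≤ vlm f := by
  obtain ⟨g', hg'G, e', he'd, hg'⟩ := hG.1.exists_vlm_dvd hf hfd
  have hgg' : vlm g ≤ vlm g' := by
    rcases le_total e e' with hee' | he'e
    · exact hg ▸ hg' ▸ toLex_le_toLex_of_fst_le hee'
    · rw [hG.eq_of_vlm_dvd hgG hg'G hg hg' he'e]
  exact hgg'.trans (hg' ▸ hfd ▸ toLex_le_toLex_of_fst_le he'd)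

end Field

theorem minimal_lpos_two_param_general {F : Type*} [Field F]
    (M : Submodule (Polynomial F) (Fin 2 → Polynomial F))
    (g₁ g₂ : Fin 2 → Polynomial F)
    (hGB : IsMinimalGroebner M ({g₁, g₂} : Finset (Fin 2 → Polynomial F)))
    (hpos : vlpos g₂ = ((1 : Fin 2) : WithBot (Fin 2))) :
    (∀ f, f ∈ M → f ≠ 0 → vlpos f = ((1 : Fin 2) : WithBot (Fin 2)) → vlm g₂ ≤ vlm f) ∧
    (∀ f, f ∈ M → f ≠ 0 → vlpos f = ((1 : Fin 2) : WithBot (Fin 2)) →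
      (∀ f', f' ∈ M → f' ≠ 0 → vlpos f' = ((1 : Fin 2) : WithBot (Fin 2)) → vlm f ≤ vlm f') →
      ∃ (a₂ : F) (a₁ : Polynomial F), a₂ ≠ 0 ∧ vlm (a₁ • g₁) ≤ vlm g₂ ∧
        f = (C a₂) • g₂ + a₁ • g₁) := by
  obtain ⟨d₂, hg₂⟩ := exists_vlm_eq_of_vlpos_eq hpos
  have hg₁M : g₁ ∈ M := hGB.1.1 (by simp)
  have hg₂M : g₂ ∈ M := hGB.1.1 (by simp)
  have vlm_g₂_le (f) (hf : f ∈ M) (hfpos : vlpos f = ((1 : Fin 2) : WithBot (Fin 2))) :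
      vlm g₂ ≤ vlm f :=
    have ⟨_, hfd⟩ := exists_vlm_eq_of_vlpos_eq hfpos
    hGB.vlm_le (by simp) hg₂ hf hfd
  -- below `vlm g₂`, only `vlm g₁` can divide leading monomials of elements of `M`
  have multiple_of_g₁ := exists_smul_eq_of_vlm_lt hg₁M (μ := vlm g₂)
    fun h hh d i hd hlt => by
      obtain ⟨g, hg, e, hed, he⟩ := hGB.1.exists_vlm_dvd hh hd
      rcases Finset.mem_insert.mp hg with rfl | hg
      · exact ⟨e, hed, he⟩
      · rw [Finset.mem_singleton.mp hg] at he
        exact absurd hlt (not_lt.mpr (he ▸ hd ▸ toLex_le_toLex_of_fst_le hed))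
  refine ⟨fun f hf _ hfpos => vlm_g₂_le f hf hfpos, fun f hf _ hfpos hmin => ?_⟩
  have hf₂ : vlm f = toLex (d₂, (1 : Fin 2)) := by
    rw [← hg₂]
    exact le_antisymm (hmin g₂ hg₂M (ne_zero_of_vlm_eq hg₂) hpos) (vlm_g₂_le f hf hfpos)
  have hlt := vlm_sub_smul_lt hf₂ hg₂ le_rfl
  rw [Nat.sub_self, pow_zero, mul_one, hf₂, ← hg₂] at hlt
  obtain ⟨a₁, ha₁⟩ := multiple_of_g₁ _ (M.sub_mem hf (M.smul_mem _ hg₂M)) hlt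
  refine ⟨_, a₁, div_ne_zero (coeff_ne_zero_of_vlm_eq hf₂) (coeff_ne_zero_of_vlm_eq hg₂),
    ha₁ ▸ hlt.le, by rw [← ha₁, add_sub_cancel]⟩

/-- Let `M ⊆ F[x]^2` be a 2-dimensional submodule with minimal Gröbner basis `{g₁, g₂}` where
`g₂` has leading position 2. Then `g₂` has minimal leading monomial among all elements of `M`
with leading position 2, and every such minimal element `f` has the form `f = a₂ g₂ + a₁ g₁`
with `a₂` a nonzero scalar and `lm (a₁ g₁) ≤ lm g₂`. -/
theorem minimal_lpos_two_param {F : Type*} [Field F]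
    (M : Submodule (Polynomial F) (Fin 2 → Polynomial F))
    (hrank : Module.rank (Polynomial F) ↥M = 2)
    (g₁ g₂ : Fin 2 → Polynomial F) (hne : g₁ ≠ g₂)
    (hGB : IsMinimalGroebner M ({g₁, g₂} : Finset (Fin 2 → Polynomial F)))
    (hpos : vlpos g₂ = ((1 : Fin 2) : WithBot (Fin 2))) :
    (∀ f, f ∈ M → f ≠ 0 → vlpos f = ((1 : Fin 2) : WithBot (Fin 2)) → vlm g₂ ≤ vlm f) ∧
    (∀ f, f ∈ M → f ≠ 0 → vlpos f = ((1 : Fin 2) : WithBot (Fin 2)) →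
      (∀ f', f' ∈ M → f' ≠ 0 → vlpos f' = ((1 : Fin 2) : WithBot (Fin 2)) → vlm f ≤ vlm f') →
      ∃ (a₂ : F) (a₁ : Polynomial F), a₂ ≠ 0 ∧ vlm (a₁ • g₁) ≤ vlm g₂ ∧
        f = (C a₂) • g₂ + a₁ • g₁) :=
  minimal_lpos_two_param_general M g₁ g₂ hGB hpos
end

section
/- Let S_1, ..., S_N be a sequence over a field F and let R^k be the 2×2 polynomial matrix produced after k steps of the iterative Gröbner-basis algorithm (Algorithm on fields), with rows g_1^k and g_2^k. Then with respect to the top monomial ordering: deg g_1^k + deg g_2^k = k + 1; lpos(g_1^k) ≠ lpos(g_2^k); g_1^k(0) = (0,0) and the second component of g_2^k has constant term 1; and R^k(σ) annihilates the trajectory b_k. -/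
open Polynomial

open scoped Classical

/-- The value at time `-n` of the trajectory obtained by applying the polynomial row vector
`f = (γ, λ)` (in the shift operator `σ`) to the trajectory `b_k`, which ends with
`…, (1,0), (0,S_1), …, (0,S_k)`. -/
noncomputable def errVal {R : Type*} [CommRing R] (S : ℕ → R) (k : ℕ)
    (f : Fin 2 → R[X]) (n : ℕ) : R :=
  ∑ i ∈ (f 0).support, (f 0).coeff i * (if n + i = k then 1 else 0) +
  ∑ i ∈ (f 1).support, (f 1).coeff i * (if n + i < k then S (k - (n + i)) else 0)

/-- The field algorithm (Algorithm 1): `g k i` is row `i+1` of the matrix `R^k`.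
Initialization `R^0 = [[x,0],[0,1]]`, and at step `k` the pivot `i⋆` is the index with
`Δ_{i⋆} ≠ 0` of minimal leading monomial; row 1 becomes `(x/Δ_{i⋆}) g_{i⋆}^{k-1}` and row 2
becomes `-Δ_2 g_1^{k-1} + Δ_1 g_2^{k-1}`, where `Δ_i = errVal S k (g (k-1) i) 0`. -/
def FieldAlgRun {F : Type*} [Field F] (S : ℕ → F) (N : ℕ)
    (g : ℕ → Fin 2 → Fin 2 → Polynomial F) : Prop :=
  g 0 0 = ![X, 0] ∧ g 0 1 = ![0, 1] ∧
  ∀ k, 1 ≤ k → k ≤ N →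
    ∃ istar : Fin 2,
      errVal S k (g (k - 1) istar) 0 ≠ 0 ∧
      (∀ i : Fin 2, errVal S k (g (k - 1) i) 0 ≠ 0 →
        vlm (g (k - 1) istar) ≤ vlm (g (k - 1) i)) ∧
      g k 0 = (C (errVal S k (g (k - 1) istar) 0)⁻¹ * X) • g (k - 1) istar ∧
      g k 1 = (C (- errVal S k (g (k - 1) 1) 0)) • g (k - 1) 0 +
              (C (errVal S k (g (k - 1) 0) 0)) • g (k - 1) 1

/-!
Induction on `k`. Applying `x • g` to a trajectory at time `-n` is applying `g` at time `-(n+1)`,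
and `b_{k+1}` is `b_k` advanced by one step, so the scaled pivot row `(x / Δ) • g_{i⋆}` still
annihilates `b_{k+1}` and has error exactly `1` at the next step, while `-Δ₂ g₁ + g₂` (recall
`Δ₁ = 1`) cancels the one new nonzero value. Since the leading positions of the two rows differ,
so do their leading monomials; minimality of the pivot then forces the new second row to keep the
leading monomial of the non-pivot row, while the new first row gets the pivot's, raised by one
degree. Hence the degree sum grows by one and the leading positions stay distinct.
-/

namespace Polynomial

variable {R S : Type*} [Semiring R] [AddCommMonoid S]

theorem sum_X_mul_index (p : R[X]) {f : ℕ → R → S} (hf : ∀ n, f n 0 = 0)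
    (hadd : ∀ n a b, f n (a + b) = f n a + f n b) :
    (X * p).sum f = p.sum fun n a => f (n + 1) a := by
  induction p using Polynomial.induction_on' with
  | add p q hp hq =>
    rw [mul_add, sum_add_index _ _ _ hf hadd, sum_add_index _ _ _ (fun _ => hf _) (fun _ => hadd _),
      hp, hq]
  | monomial n a =>
    rw [X_mul_monomial, sum_monomial_index _ _ (hf _),
      sum_monomial_index a (fun m b => f (m + 1) b) (hf _)]

end Polynomial

section ErrVal

variable {R : Type*} [CommRing R] (S : ℕ → R)

theorem errVal_eq_sum (k : ℕ) (f : Fin 2 → R[X]) (n : ℕ) :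
    errVal S k f n =
      (f 0).sum (fun i a => a * if n + i = k then 1 else 0) +
      (f 1).sum (fun i a => a * if n + i < k then S (k - (n + i)) else 0) := rfl

theorem errVal_zero (k n : ℕ) : errVal S k 0 n = 0 := by
  simp [errVal_eq_sum]

theorem errVal_add (k : ℕ) (f h : Fin 2 → R[X]) (n : ℕ) :
    errVal S k (f + h) n = errVal S k f n + errVal S k h n := by
  simp only [errVal_eq_sum, Pi.add_apply]
  rw [sum_add_index _ _ _ (fun _ => zero_mul _) (fun _ _ _ => add_mul _ _ _),
    sum_add_index _ _ _ (fun _ => zero_mul _) (fun _ _ _ => add_mul _ _ _)]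
  abel

theorem errVal_C_smul (k : ℕ) (c : R) (f : Fin 2 → R[X]) (n : ℕ) :
    errVal S k (C c • f) n = c * errVal S k f n := by
  simp only [errVal_eq_sum, Pi.smul_apply, smul_eq_mul, ← smul_eq_C_mul]
  rw [sum_smul_index _ _ _ (fun _ => zero_mul _), sum_smul_index _ _ _ (fun _ => zero_mul _)]
  simp only [sum_def, mul_add, Finset.mul_sum, mul_assoc]

theorem errVal_X_smul (k : ℕ) (f : Fin 2 → R[X]) (n : ℕ) :
    errVal S k ((X : R[X]) • f) n = errVal S k f (n + 1) := by
  simp only [errVal_eq_sum, Pi.smul_apply, smul_eq_mul]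
  rw [sum_X_mul_index _ (fun _ => zero_mul _) (fun _ _ _ => add_mul _ _ _),
    sum_X_mul_index _ (fun _ => zero_mul _) (fun _ _ _ => add_mul _ _ _)]
  simp only [add_assoc, add_comm 1]

theorem errVal_succ_succ (k : ℕ) (f : Fin 2 → R[X]) (n : ℕ) :
    errVal S (k + 1) f (n + 1) = errVal S k f n := by
  simp only [errVal_eq_sum, Nat.add_right_comm n 1, Nat.add_right_cancel_iff,
    Nat.add_lt_add_iff_right, Nat.add_sub_add_right]

end ErrVal

theorem Finset.max_image_of_monotone {α β : Type*} [LinearOrder α] [LinearOrder β]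
    [DecidableEq β] {φ : α → β} (hφ : Monotone φ) (s : Finset α) :
    (s.image φ).max = s.max.map φ := by
  rw [Finset.max_eq_sup_withBot, Finset.sup_image, Finset.max_eq_sup_withBot,
    Finset.apply_sup_eq_sup_comp_of_linearOrder _ (WithBot.monotone_map_iff.mpr hφ) rfl]
  rfl

section LeadingMonomial

variable {R : Type*} [CommRing R] {q : ℕ}

theorem mem_vsupp_s15 {f : Fin q → R[X]} {m : Lex (ℕ × Fin q)} :
    m ∈ vsupp f ↔ (f (ofLex m).2).coeff (ofLex m).1 ≠ 0 := by
  simp only [vsupp, Finset.mem_biUnion, Finset.mem_image, Finset.mem_univ, true_and,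
    mem_support_iff]
  constructor
  · rintro ⟨i, d, hd, rfl⟩
    exact hd
  · intro h
    exact ⟨_, _, h, toLex_ofLex m⟩

theorem vlm_eq_bot {f : Fin q → R[X]} : vlm f = ⊥ ↔ f = 0 := by
  rw [vlm, Finset.max_eq_bot, Finset.eq_empty_iff_forall_notMem]
  constructor
  · intro h
    funext j
    ext d
    simpa using mt mem_vsupp_s15.mpr (h (toLex (d, j)))
  · rintro rfl m
    simp [mem_vsupp_s15]

theorem vlm_C_smul [NoZeroDivisors R] {c : R} (hc : c ≠ 0) (f : Fin q → R[X]) :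
    vlm (C c • f) = vlm f := by
  have hsupp : vsupp (C c • f) = vsupp f := by
    ext m
    simp [mem_vsupp_s15, coeff_C_mul, hc]
  rw [vlm, hsupp, vlm]

def Lex.succFst {ι : Type*} (m : Lex (ℕ × ι)) : Lex (ℕ × ι) :=
  toLex ((ofLex m).1 + 1, (ofLex m).2)

theorem vlm_X_smul (f : Fin q → R[X]) :
    vlm ((X : R[X]) • f) = (vlm f).map Lex.succFst := by
  have hsupp : vsupp ((X : R[X]) • f) = (vsupp f).image Lex.succFst := by
    ext m
    obtain ⟨⟨d, j⟩, rfl⟩ := toLex.surjective m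
    cases d with
    | zero => simp [mem_vsupp_s15, Lex.succFst]
    | succ d => simp [mem_vsupp_s15, Lex.succFst, coeff_X_mul]
  have hmono : Monotone (Lex.succFst : Lex (ℕ × Fin q) → _) := by
    intro a b hab
    rw [Prod.Lex.le_iff] at hab
    simp only [Lex.succFst, Prod.Lex.toLex_le_toLex, Nat.add_lt_add_iff_right,
      Nat.add_right_cancel_iff]
    exact hab
  rw [vlm, hsupp, Finset.max_image_of_monotone hmono, vlm]

theorem vlm_add_of_lt {f h : Fin q → R[X]} (hlt : vlm f < vlm h) : vlm (f + h) = vlm h := by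
  have hsupp : vsupp (f + h) ⊆ vsupp f ∪ vsupp h := by
    intro m hm
    rw [Finset.mem_union, mem_vsupp_s15, mem_vsupp_s15]
    rw [mem_vsupp_s15, Pi.add_apply, coeff_add] at hm
    by_contra! hzero
    exact hm (by rw [hzero.1, hzero.2, add_zero])
  refine le_antisymm ?_ ?_
  · calc vlm (f + h) ≤ (vsupp f ∪ vsupp h).max := Finset.max_mono hsupp
      _ = vlm h := by rw [Finset.max_union, ← vlm, ← vlm, sup_of_le_right hlt.le]
  · obtain ⟨m, hm⟩ := WithBot.ne_bot_iff_exists.mp (ne_bot_of_gt hlt)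
    have hmh : m ∈ vsupp h := Finset.mem_of_max hm.symm
    have hmf : m ∉ vsupp f := fun hmf => (Finset.le_max hmf).not_gt (hm ▸ hlt)
    rw [← hm]
    refine Finset.le_max (mem_vsupp_s15.mpr ?_)
    rw [mem_vsupp_s15] at hmh hmf
    rw [Pi.add_apply, coeff_add, not_not.mp hmf, zero_add]
    exact hmh

theorem vlm_C_mul_X_smul [NoZeroDivisors R] {c : R} (hc : c ≠ 0) (f : Fin q → R[X]) :
    vlm ((C c * X) • f) = (vlm f).map Lex.succFst := by
  rw [mul_smul, vlm_C_smul hc, vlm_X_smul]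

theorem vdeg_C_mul_X_smul [NoZeroDivisors R] {c : R} (hc : c ≠ 0) {f : Fin q → R[X]}
    (hf : f ≠ 0) : vdeg ((C c * X) • f) = vdeg f + 1 := by
  obtain ⟨m, hm⟩ := WithBot.ne_bot_iff_exists.mp (mt vlm_eq_bot.mp hf)
  rw [vdeg, vdeg, vlm_C_mul_X_smul hc, ← hm]
  rfl

theorem vlpos_C_mul_X_smul [NoZeroDivisors R] {c : R} (hc : c ≠ 0) (f : Fin q → R[X]) :
    vlpos ((C c * X) • f) = vlpos f := by
  simp only [vlpos, vlm_C_mul_X_smul hc, WithBot.map_map]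
  rfl

theorem vlm_single_X_pow [Nontrivial R] (j : Fin q) (d : ℕ) :
    vlm (Pi.single j (X ^ d) : Fin q → R[X]) = toLex (d, j) := by
  have hsupp : vsupp (Pi.single j (X ^ d) : Fin q → R[X]) = {toLex (d, j)} := by
    ext m
    obtain ⟨⟨e, l⟩, rfl⟩ := toLex.surjective m
    by_cases hl : l = j
    · subst hl
      simp [mem_vsupp_s15, coeff_X_pow, eq_comm]
    · simp [mem_vsupp_s15, hl]
  rw [vlm, hsupp, Finset.max_singleton]

end LeadingMonomial

section FieldAlgorithm

variable {F : Type*} [Field F] (S : ℕ → F)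

structure FieldAlgInvariant (k : ℕ) (G : Fin 2 → Fin 2 → F[X]) : Prop where
  vdeg_add : vdeg (G 0) + vdeg (G 1) = k + 1
  vlpos_ne : vlpos (G 0) ≠ vlpos (G 1)
  coeff_zero_first : ∀ j, (G 0 j).coeff 0 = 0
  coeff_zero_second : (G 1 1).coeff 0 = 1
  errVal_first_succ : errVal S (k + 1) (G 0) 0 = 1
  annihilates : ∀ i n, errVal S k (G i) n = 0

theorem fieldAlgInvariant_zero {G : Fin 2 → Fin 2 → F[X]} (h0 : G 0 = ![X, 0])
    (h1 : G 1 = ![0, 1]) : FieldAlgInvariant S 0 G := by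
  have hlm0 : vlm (G 0) = ((toLex (1, 0) : Lex (ℕ × Fin 2)) : WithBot _) := by
    rw [h0, ← vlm_single_X_pow (R := F) 0 1]
    congr 1
    ext j : 1
    fin_cases j <;> simp
  have hlm1 : vlm (G 1) = ((toLex (0, 1) : Lex (ℕ × Fin 2)) : WithBot _) := by
    rw [h1, ← vlm_single_X_pow (R := F) 1 0]
    congr 1
    ext j : 1
    fin_cases j <;> simp
  refine ⟨?_, ?_, ?_, ?_, ?_, ?_⟩
  · simp [vdeg, hlm0, hlm1]
  · simp only [vlpos, hlm0, hlm1, WithBot.map_coe, ofLex_toLex]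
    decide
  · intro j
    fin_cases j <;> simp [h0]
  · simp [h1]
  · simp [h0, errVal_eq_sum]
  · intro i n
    fin_cases i <;> simp [h0, h1, errVal_eq_sum, sum_def]

variable {S} {k : ℕ} {G : Fin 2 → Fin 2 → F[X]}

/-- Distinct leading positions make the leading monomials distinct, so the minimality of the pivot
is strict and the two summands of the new second row cannot cancel at the top. -/
theorem FieldAlgInvariant.vlm_second_row (hG : FieldAlgInvariant S k G) {i : Fin 2}
    (hi : errVal S (k + 1) (G i) 0 ≠ 0)
    (hmin : ∀ j, errVal S (k + 1) (G j) 0 ≠ 0 → vlm (G i) ≤ vlm (G j)) :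
    vlm (C (-errVal S (k + 1) (G 1) 0) • G 0 + G 1) = vlm (G i.rev) := by
  have hne : vlm (G 0) ≠ vlm (G 1) := fun h => hG.vlpos_ne (by simp only [vlpos, h])
  obtain rfl | rfl : i = 0 ∨ i = 1 := by omega
  · by_cases hΔ : errVal S (k + 1) (G 1) 0 = 0
    · simp [hΔ]
    · have hlt : vlm (G 0) < vlm (G 1) := (hmin 1 hΔ).lt_of_ne hne
      rw [vlm_add_of_lt (by rwa [vlm_C_smul (neg_ne_zero.mpr hΔ)])]
      rfl
  · have hlt : vlm (G 1) < vlm (G 0) :=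
      (hmin 0 (by rw [hG.errVal_first_succ]; exact one_ne_zero)).lt_of_ne hne.symm
    rw [add_comm, vlm_add_of_lt (by rwa [vlm_C_smul (neg_ne_zero.mpr hi)]),
      vlm_C_smul (neg_ne_zero.mpr hi)]
    rfl

theorem FieldAlgInvariant.step (hG : FieldAlgInvariant S k G) {G' : Fin 2 → Fin 2 → F[X]}
    {i : Fin 2} (hi : errVal S (k + 1) (G i) 0 ≠ 0)
    (hmin : ∀ j, errVal S (k + 1) (G j) 0 ≠ 0 → vlm (G i) ≤ vlm (G j))
    (h0 : G' 0 = (C (errVal S (k + 1) (G i) 0)⁻¹ * X) • G i)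
    (h1 : G' 1 = C (-errVal S (k + 1) (G 1) 0) • G 0 + C (errVal S (k + 1) (G 0) 0) • G 1) :
    FieldAlgInvariant S (k + 1) G' := by
  rw [hG.errVal_first_succ, map_one, one_smul] at h1
  have hGi : G i ≠ 0 := fun h => hi (by rw [h, errVal_zero])
  have hlm1 : vlm (G' 1) = vlm (G i.rev) := h1 ▸ hG.vlm_second_row hi hmin
  have hdeg1 : vdeg (G' 1) = vdeg (G i.rev) := by simp only [vdeg, hlm1]
  have hpos1 : vlpos (G' 1) = vlpos (G i.rev) := by simp only [vlpos, hlm1]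
  refine ⟨?_, ?_, ?_, ?_, ?_, ?_⟩
  · rw [h0, vdeg_C_mul_X_smul (inv_ne_zero hi) hGi, hdeg1]
    have hsum := hG.vdeg_add
    obtain rfl | rfl : i = 0 ∨ i = 1 := by omega
    · show vdeg (G 0) + 1 + vdeg (G 1) = k + 1 + 1
      omega
    · show vdeg (G 1) + 1 + vdeg (G 0) = k + 1 + 1
      omega
  · rw [h0, vlpos_C_mul_X_smul (inv_ne_zero hi), hpos1]
    obtain rfl | rfl : i = 0 ∨ i = 1 := by omega
    · exact hG.vlpos_ne
    · exact hG.vlpos_ne.symm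
  · intro j
    simp [h0, mul_assoc]
  · simp [h1, hG.coeff_zero_first, hG.coeff_zero_second]
  · rw [h0, mul_smul, errVal_C_smul, errVal_X_smul, errVal_succ_succ, inv_mul_cancel₀ hi]
  · intro j n
    obtain rfl | rfl : j = 0 ∨ j = 1 := by omega
    · rw [h0, mul_smul, errVal_C_smul, errVal_X_smul, errVal_succ_succ, hG.annihilates, mul_zero]
    · rw [h1, errVal_add, errVal_C_smul]
      cases n with
      | zero => rw [hG.errVal_first_succ, mul_one, neg_add_cancel]
      | succ n =>
        rw [errVal_succ_succ, errVal_succ_succ, hG.annihilates, hG.annihilates, mul_zero,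
          add_zero]

theorem fieldAlgInvariant_of_run {N : ℕ} {g : ℕ → Fin 2 → Fin 2 → F[X]}
    (hrun : FieldAlgRun S N g) : ∀ k ≤ N, FieldAlgInvariant S k (g k) := by
  obtain ⟨h00, h01, hstep⟩ := hrun
  intro k
  induction k with
  | zero => exact fun _ => fieldAlgInvariant_zero S h00 h01
  | succ k ih =>
    intro hk
    obtain ⟨i, hi, hmin, h0, h1⟩ := hstep (k + 1) (Nat.le_add_left 1 k) hk
    exact (ih (Nat.le_of_succ_le hk)).step hi hmin h0 h1

end FieldAlgorithm

/-- Properties of the field algorithm (Lemma 2): for every `k ≤ N`, the rows `g_1^k, g_2^k`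
of `R^k` satisfy: `deg g_1^k + deg g_2^k = k + 1`; their leading positions differ;
`g_1^k(0) = (0,0)` and the second component of `g_2^k` has constant term 1;
`Δ_1^{k+1} = 1`; and `R^k(σ)` annihilates the trajectory `b_k`. -/
theorem field_algorithm_properties {F : Type*} [Field F] (S : ℕ → F) (N : ℕ)
    (g : ℕ → Fin 2 → Fin 2 → Polynomial F) (hrun : FieldAlgRun S N g) :
    ∀ k ≤ N,
      (vdeg (g k 0) + vdeg (g k 1) = k + 1) ∧
      vlpos (g k 0) ≠ vlpos (g k 1) ∧
      (∀ j, (g k 0 j).coeff 0 = 0) ∧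
      (g k 1 1).coeff 0 = 1 ∧
      errVal S (k + 1) (g k 0) 0 = 1 ∧
      (∀ i n, errVal S k (g k i) n = 0) := by
  intro k hk
  have h := fieldAlgInvariant_of_run hrun k hk
  exact ⟨h.vdeg_add, h.vlpos_ne, h.coeff_zero_first, h.coeff_zero_second, h.errVal_first_succ,
    h.annihilates⟩
end

section
/- Let S_1,...,S_N be a sequence over a field F. For each k, the rows g_1^k, g_2^k of the matrix R^k produced by the iterative algorithm form a minimal Gröbner basis (with respect to the top ordering) of the row space of the 2×2 matrix [[x^{k+1}, 0], [−(S_k x^k + S_{k-1} x^{k-1} + ... + S_1 x), 1]] over F[x]. -/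
open Polynomial

open scoped Classical

/-!
Every row of `R^k` lies in `M_k = rowSpace S k`: the new first row is `x` times an old row, and
the new second row is the combination of the old rows that kills the next discrepancy `Δ`. The
pivot rule keeps the two leading positions distinct (weak Popov form) and raises the sum of the
leading degrees by one, so this sum stays `k + 1 = deg det M_k`. Written in terms of the
generators of `M_k`, the determinant of the two rows is `u * x^(k+1)`, and it has degree `k + 1`
because distinct leading positions prevent cancellation; hence `u` is a nonzero constant and the
rows generate `M_k`. For the same reason the leading term of any combination of the rows is a
multiple of one of their leading terms, which is the Gröbner property, and neither row reduces
modulo the other since a reduction step preserves the leading position.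
-/

section LeadingMonomial

variable {R : Type*} [CommRing R] {q : ℕ} {f g : Fin q → R[X]} {d : ℕ} {p : Fin q}

theorem toLex_mem_vsupp {i : ℕ} {j : Fin q} :
    toLex (i, j) ∈ vsupp f ↔ (f j).coeff i ≠ 0 := by
  simp [vsupp]

theorem vlm_eq_coe_iff :
    vlm f = ↑(toLex (d, p)) ↔
      (f p).coeff d ≠ 0 ∧ ∀ i j, (f j).coeff i ≠ 0 → toLex (i, j) ≤ toLex (d, p) := by
  refine ⟨fun h => ⟨toLex_mem_vsupp.1 (Finset.mem_of_max h), fun i j hij => ?_⟩,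
    fun ⟨hlc, hle⟩ => le_antisymm (Finset.max_le ?_) (Finset.le_max (toLex_mem_vsupp.2 hlc))⟩
  · exact WithBot.coe_le_coe.1 (h ▸ Finset.le_max (toLex_mem_vsupp.2 hij))
  · rintro ⟨i, j⟩ hm
    exact WithBot.coe_le_coe.2 (hle i j (toLex_mem_vsupp.1 hm))

theorem vlm_zero : vlm (0 : Fin q → R[X]) = ⊥ := by
  simp [vlm, vsupp, Finset.max_eq_bot, ← Finset.subset_empty]

theorem vlt_zero : vlt (0 : Fin q → R[X]) = 0 := by
  rw [vlt, vlm_zero]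
  rfl

theorem coeff_eq_zero_of_vlm_lt {i : ℕ} {j : Fin q} (h : vlm f < ↑(toLex (i, j))) :
    (f j).coeff i = 0 := by
  by_contra hc
  exact (Finset.le_max (toLex_mem_vsupp.2 hc)).not_gt h

theorem natDegree_le_of_vlm_eq_coe (h : vlm f = ↑(toLex (d, p))) (j : Fin q) :
    (f j).natDegree ≤ d := by
  refine natDegree_le_iff_coeff_eq_zero.2 fun i hi => coeff_eq_zero_of_vlm_lt (h ▸ ?_)
  exact WithBot.coe_lt_coe.2 (Prod.Lex.toLex_lt_toLex.2 (Or.inl (by exact_mod_cast hi)))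

theorem natDegree_lt_of_vlm_eq_coe (h : vlm f = ↑(toLex (d, p))) {j : Fin q} (hj : p < j)
    (hfj : f j ≠ 0) : (f j).natDegree < d := by
  refine (natDegree_le_of_vlm_eq_coe h j).lt_of_ne fun hd => ?_
  refine leadingCoeff_ne_zero.2 hfj (coeff_eq_zero_of_vlm_lt (h ▸ ?_))
  exact WithBot.coe_lt_coe.2 (Prod.Lex.toLex_lt_toLex.2 (Or.inr ⟨hd.symm, hj⟩))

theorem degree_eq_of_vlm_eq_coe (h : vlm f = ↑(toLex (d, p))) : (f p).degree = d :=
  degree_eq_of_le_of_coeff_ne_zero (degree_le_of_natDegree_le (natDegree_le_of_vlm_eq_coe h p))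
    (vlm_eq_coe_iff.1 h).1

theorem natDegree_eq_of_vlm_eq_coe (h : vlm f = ↑(toLex (d, p))) : (f p).natDegree = d :=
  natDegree_eq_of_degree_eq_some (degree_eq_of_vlm_eq_coe h)

theorem vlt_eq_of_vlm_eq_coe (h : vlm f = ↑(toLex (d, p))) :
    vlt f = fun j => if j = p then C ((f p).coeff d) * X ^ d else 0 := by
  rw [vlt, h]
  rfl

theorem vlm_add_of_vlm_lt (h : vlm f < vlm g) : vlm (f + g) = vlm g := by
  obtain ⟨⟨d, p⟩, hg⟩ := WithBot.ne_bot_iff_exists.1 (ne_bot_of_gt h)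
  rw [← hg] at h ⊢
  obtain ⟨hlc, hle⟩ := vlm_eq_coe_iff.1 hg.symm
  refine vlm_eq_coe_iff.2 ⟨?_, fun i j hij => ?_⟩
  · rwa [Pi.add_apply, coeff_add, coeff_eq_zero_of_vlm_lt h, zero_add]
  · rw [Pi.add_apply, coeff_add] at hij
    by_cases hfij : (f j).coeff i = 0
    · exact hle i j (by rwa [hfij, zero_add] at hij)
    · exact WithBot.coe_le_coe.1 ((Finset.le_max (toLex_mem_vsupp.2 hfij)).trans h.le)

theorem vlt_add_of_vlm_lt (h : vlm f < vlm g) : vlt (f + g) = vlt g := by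
  obtain ⟨⟨d, p⟩, hg⟩ := WithBot.ne_bot_iff_exists.1 (ne_bot_of_gt h)
  rw [vlt_eq_of_vlm_eq_coe hg.symm, vlt_eq_of_vlm_eq_coe ((vlm_add_of_vlm_lt h).trans hg.symm),
    Pi.add_apply, coeff_add, coeff_eq_zero_of_vlm_lt (hg ▸ h), zero_add]

theorem vlm_smul_of_vlm_eq_coe [NoZeroDivisors R] {a : R[X]} (ha : a ≠ 0)
    (h : vlm f = ↑(toLex (d, p))) : vlm (a • f) = ↑(toLex (a.natDegree + d, p)) := by
  have hfp : f p ≠ 0 := fun hz => (vlm_eq_coe_iff.1 h).1 (by simp [hz])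
  refine vlm_eq_coe_iff.2 ⟨?_, fun i j hij => ?_⟩
  · rw [Pi.smul_apply, smul_eq_mul, ← natDegree_eq_of_vlm_eq_coe h,
      coeff_mul_degree_add_degree]
    exact mul_ne_zero (leadingCoeff_ne_zero.2 ha) (leadingCoeff_ne_zero.2 hfp)
  · rw [Pi.smul_apply, smul_eq_mul] at hij
    have hfj : f j ≠ 0 := by rintro hz; simp [hz] at hij
    have hi : i ≤ a.natDegree + (f j).natDegree :=
      natDegree_mul ha hfj ▸ le_natDegree_of_ne_zero hij
    have hdj := natDegree_le_of_vlm_eq_coe h j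
    refine Prod.Lex.toLex_le_toLex.2
      ((hi.trans (by omega)).lt_or_eq.imp_right fun heq => ⟨heq, ?_⟩)
    by_contra! hpj
    dsimp only at heq hpj
    have := natDegree_lt_of_vlm_eq_coe h hpj hfj
    omega

theorem vlt_smul_of_vlm_eq_coe [NoZeroDivisors R] {a : R[X]} (ha : a ≠ 0)
    (h : vlm f = ↑(toLex (d, p))) :
    vlt (a • f) = (C a.leadingCoeff * X ^ a.natDegree) • vlt f := by
  rw [vlt_eq_of_vlm_eq_coe (vlm_smul_of_vlm_eq_coe ha h), vlt_eq_of_vlm_eq_coe h]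
  ext1 j
  simp only [Pi.smul_apply, smul_eq_mul]
  split_ifs with hj
  · subst hj
    rw [← natDegree_eq_of_vlm_eq_coe h, coeff_mul_degree_add_degree]
    simp only [leadingCoeff, C_mul, pow_add]
    ring
  · rw [mul_zero]

theorem vlpos_of_vlm_eq_coe (h : vlm f = ↑(toLex (d, p))) : vlpos f = p := by
  rw [vlpos, h]
  rfl

theorem ReducesOneStep.exists_vlpos_eq {G : Finset (Fin q → R[X])} {h : Fin q → R[X]}
    (hred : ReducesOneStep G f h) : ∃ g ∈ G, vlpos g = vlpos f := by
  obtain ⟨-, m, jv, _, _, hm, hmem, -, -, -, hvlm, -⟩ := hred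
  refine ⟨jv ⟨0, hm⟩, hmem _, ?_⟩
  rw [vlpos, vlpos, hvlm ⟨0, hm⟩, WithBot.map_map]
  rfl

theorem IsGroebner.isMinimalGroebner {M : Submodule R[X] (Fin q → R[X])}
    {G : Finset (Fin q → R[X])} (hG : IsGroebner M G)
    (hinj : Set.InjOn vlpos (G : Set (Fin q → R[X]))) :
    IsMinimalGroebner M G := by
  refine ⟨hG, fun g hg h hred => ?_⟩
  obtain ⟨g', hg', hpos⟩ := hred.exists_vlpos_eq
  obtain ⟨hne, hg'G⟩ := Finset.mem_erase.1 hg'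
  exact hne (hinj hg'G hg hpos)

variable [NoZeroDivisors R] {f₀ f₁ : Fin q → R[X]} {d₀ d₁ : ℕ} {p₀ p₁ : Fin q}

theorem vlt_mem_span_vlt_pair (h₀ : vlm f₀ = ↑(toLex (d₀, p₀)))
    (h₁ : vlm f₁ = ↑(toLex (d₁, p₁))) (hp : p₀ ≠ p₁)
    (hf : f ∈ Submodule.span R[X] {f₀, f₁}) :
    vlt f ∈ Submodule.span R[X] {vlt f₀, vlt f₁} := by
  have hterm : ∀ (c : R[X]) {g : Fin q → R[X]} {d : ℕ} {p : Fin q},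
      vlm g = ↑(toLex (d, p)) → vlt g ∈ Submodule.span R[X] {vlt f₀, vlt f₁} →
      vlt (c • g) ∈ Submodule.span R[X] {vlt f₀, vlt f₁} := by
    intro c g d p hg hmem
    rcases eq_or_ne c 0 with rfl | hc
    · rw [zero_smul, vlt_zero]
      exact Submodule.zero_mem _
    · rw [vlt_smul_of_vlm_eq_coe hc hg]
      exact Submodule.smul_mem _ _ hmem
  have hmem₀ := fun c => hterm c h₀ (Submodule.subset_span (Set.mem_insert _ _))
  have hmem₁ := fun c => hterm c h₁ (Submodule.subset_span (Set.mem_insert_of_mem _ rfl))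
  obtain ⟨a, b, rfl⟩ := Submodule.mem_span_pair.1 hf
  rcases eq_or_ne a 0 with rfl | ha
  · simpa using hmem₁ b
  rcases eq_or_ne b 0 with rfl | hb
  · simpa using hmem₀ a
  have hne : vlm (a • f₀) ≠ vlm (b • f₁) := by
    rw [vlm_smul_of_vlm_eq_coe ha h₀, vlm_smul_of_vlm_eq_coe hb h₁]
    simp [hp]
  rcases hne.lt_or_gt with hlt | hlt
  · rw [vlt_add_of_vlm_lt hlt]
    exact hmem₁ b
  · rw [add_comm, vlt_add_of_vlm_lt hlt]
    exact hmem₀ a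

theorem isMinimalGroebner_span_pair (h₀ : vlm f₀ = ↑(toLex (d₀, p₀)))
    (h₁ : vlm f₁ = ↑(toLex (d₁, p₁))) (hp : p₀ ≠ p₁) :
    IsMinimalGroebner (Submodule.span R[X] {f₀, f₁}) {f₀, f₁} := by
  have hG : (({f₀, f₁} : Finset (Fin q → R[X])) : Set (Fin q → R[X])) = {f₀, f₁} := by
    simp
  refine IsGroebner.isMinimalGroebner ⟨hG ▸ Submodule.subset_span, le_antisymm
    (Submodule.span_mono (Set.image_mono (hG ▸ Submodule.subset_span))) ?_⟩ ?_
  · rw [ltSubmodule, Submodule.span_le]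
    rintro _ ⟨f, hf, rfl⟩
    rw [hG, ltSubmodule, Set.image_pair]
    exact vlt_mem_span_vlt_pair h₀ h₁ hp hf
  · rw [hG, Set.injOn_pair, vlpos_of_vlm_eq_coe h₀, vlpos_of_vlm_eq_coe h₁]
    intro h
    exact absurd (WithBot.coe_inj.1 h) hp

end LeadingMonomial

section WeakPopov

variable {R : Type*} [CommRing R] {q n : ℕ} {f g : Fin q → R[X]}

def IsWeakPopovPair (n : ℕ) (f g : Fin q → R[X]) : Prop :=
  ∃ (d e : ℕ) (i j : Fin q), i ≠ j ∧ d + e = n ∧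
    vlm f = ↑(toLex (d, i)) ∧ vlm g = ↑(toLex (e, j))

theorem IsWeakPopovPair.symm (h : IsWeakPopovPair n f g) : IsWeakPopovPair n g f := by
  obtain ⟨d, e, i, j, hij, hsum, hf, hg⟩ := h
  exact ⟨e, d, j, i, hij.symm, by omega, hg, hf⟩

variable [NoZeroDivisors R]

theorem IsWeakPopovPair.isMinimalGroebner (h : IsWeakPopovPair n f g) :
    IsMinimalGroebner (Submodule.span R[X] {f, g}) {f, g} := by
  obtain ⟨d, e, i, j, hij, -, hf, hg⟩ := h
  exact isMinimalGroebner_span_pair hf hg hij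

theorem IsWeakPopovPair.step [Nontrivial R] {a b c : R} (hc : c ≠ 0) (hb : b ≠ 0)
    (hab : a ≠ 0 → vlm f ≤ vlm g) (h : IsWeakPopovPair n f g) :
    IsWeakPopovPair (n + 1) ((C c * X) • f) (C a • f + C b • g) := by
  obtain ⟨d, e, i, j, hij, hsum, hf, hg⟩ := h
  have hCf (a : R) (ha : a ≠ 0) : vlm (C a • f) = vlm f := by
    rw [vlm_smul_of_vlm_eq_coe (C_ne_zero.2 ha) hf, natDegree_C, zero_add, hf]
  have hCg : vlm (C b • g) = ↑(toLex (e, j)) := by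
    rw [vlm_smul_of_vlm_eq_coe (C_ne_zero.2 hb) hg, natDegree_C, zero_add]
  refine ⟨d + 1, e, i, j, hij, by omega, ?_, ?_⟩
  · rw [vlm_smul_of_vlm_eq_coe (mul_ne_zero (C_ne_zero.2 hc) X_ne_zero) hf,
      natDegree_C_mul_X c hc, add_comm]
  · rcases eq_or_ne a 0 with rfl | ha
    · rwa [C_0, zero_smul, zero_add]
    · refine (vlm_add_of_vlm_lt ?_).trans hCg
      rw [hCf a ha, hCg, ← hg]
      exact (hab ha).lt_of_ne (by simp [hf, hg, hij])

theorem degree_det_of_vlm_eq_coe {f g : Fin 2 → R[X]} {d e : ℕ}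
    (hf : vlm f = ↑(toLex (d, (0 : Fin 2)))) (hg : vlm g = ↑(toLex (e, (1 : Fin 2)))) :
    (Matrix.of ![f, g]).det.degree = ↑(d + e) := by
  simp only [Matrix.det_fin_two, Matrix.of_apply, Matrix.cons_val_zero, Matrix.cons_val_one]
  have hdiag : (f 0 * g 1).degree = ↑(d + e) := by
    rw [degree_mul, degree_eq_of_vlm_eq_coe hf, degree_eq_of_vlm_eq_coe hg]
    norm_cast
  have hanti : (f 1 * g 0).degree < ↑(d + e) := by
    by_cases h0 : f 1 * g 0 = 0
    · simp [h0]
    rw [degree_eq_natDegree h0, natDegree_mul (left_ne_zero_of_mul h0) (right_ne_zero_of_mul h0)]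
    have := natDegree_lt_of_vlm_eq_coe hf (j := 1) (by decide) (left_ne_zero_of_mul h0)
    have := natDegree_le_of_vlm_eq_coe hg 0
    exact_mod_cast (by omega)
  rw [degree_sub_eq_left_of_degree_lt (hdiag ▸ hanti), hdiag]

theorem IsWeakPopovPair.degree_det {f g : Fin 2 → R[X]} (h : IsWeakPopovPair n f g) :
    (Matrix.of ![f, g]).det.degree = n := by
  obtain ⟨d, e, i, j, hij, rfl, hf, hg⟩ := h
  have hcases : ∀ i j : Fin 2, i ≠ j → (i = 0 ∧ j = 1) ∨ (i = 1 ∧ j = 0) := by decide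
  obtain ⟨rfl, rfl⟩ | ⟨rfl, rfl⟩ := hcases i j hij
  · exact degree_det_of_vlm_eq_coe hf hg
  · have hswap : (Matrix.of ![f, g]).det = -(Matrix.of ![g, f]).det := by
      simp only [Matrix.det_fin_two, Matrix.of_apply, Matrix.cons_val_zero, Matrix.cons_val_one]
      ring
    rw [hswap, degree_neg, add_comm]
    exact degree_det_of_vlm_eq_coe hg hf

end WeakPopov

theorem Submodule.span_pair_le_span_pair_of_isUnit {A M : Type*} [CommRing A] [AddCommGroup M]
    [Module A M] {v w : M} {a b c d : A} (h : IsUnit (a * d - b * c)) :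
    Submodule.span A {v, w} ≤ Submodule.span A {a • v + b • w, c • v + d • w} := by
  obtain ⟨u, hu⟩ := h.exists_left_inv
  rw [Submodule.span_le, Set.insert_subset_iff, Set.singleton_subset_iff]
  constructor
  · refine Submodule.mem_span_pair.2 ⟨u * d, -(u * b), ?_⟩
    calc (u * d) • (a • v + b • w) + (-(u * b)) • (c • v + d • w)
          = (u * (a * d - b * c)) • v := by module
      _ = v := by rw [hu, one_smul]
  · refine Submodule.mem_span_pair.2 ⟨-(u * c), u * a, ?_⟩
    calc (-(u * c)) • (a • v + b • w) + (u * a) • (c • v + d • w)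
          = (u * (a * d - b * c)) • w := by module
      _ = w := by rw [hu, one_smul]

theorem IsWeakPopovPair.span_eq {F : Type*} [Field F] {n : ℕ} {v w f g : Fin 2 → F[X]}
    (hdet : (Matrix.of ![v, w]).det.degree = n) (hf : f ∈ Submodule.span F[X] {v, w})
    (hg : g ∈ Submodule.span F[X] {v, w}) (hfg : IsWeakPopovPair n f g) :
    Submodule.span F[X] {f, g} = Submodule.span F[X] {v, w} := by
  refine le_antisymm (Submodule.span_le.2 (Set.insert_subset hf (Set.singleton_subset_iff.2 hg))) ?_
  obtain ⟨a, b, rfl⟩ := Submodule.mem_span_pair.1 hf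
  obtain ⟨c, d, rfl⟩ := Submodule.mem_span_pair.1 hg
  refine Submodule.span_pair_le_span_pair_of_isUnit (isUnit_iff_degree_eq_zero.2 ?_)
  have hmul : (Matrix.of ![a • v + b • w, c • v + d • w]).det =
      (a * d - b * c) * (Matrix.of ![v, w]).det := by
    simp only [Matrix.det_fin_two, Matrix.of_apply, Matrix.cons_val_zero, Matrix.cons_val_one,
      Pi.add_apply, Pi.smul_apply, smul_eq_mul]
    ring
  have hdeg := hfg.degree_det
  rw [hmul, degree_mul, hdet] at hdeg
  have hu : a * d - b * c ≠ 0 := by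
    rintro hu
    simp [hu] at hdeg
  rw [degree_eq_natDegree hu] at hdeg ⊢
  norm_cast at hdeg ⊢
  omega

section RowSpace

variable {R : Type*} [CommRing R] (S : ℕ → R) {k : ℕ} {f h : Fin 2 → R[X]}

noncomputable def seqPoly (k : ℕ) : R[X] :=
  ∑ i ∈ Finset.range k, C (S (i + 1)) * X ^ (i + 1)

noncomputable def rowSpace (k : ℕ) : Submodule R[X] (Fin 2 → R[X]) :=
  Submodule.span R[X] {![X ^ (k + 1), 0], ![-seqPoly S k, 1]}

theorem seqPoly_succ (k : ℕ) : seqPoly S (k + 1) = seqPoly S k + C (S (k + 1)) * X ^ (k + 1) :=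
  Finset.sum_range_succ _ _

theorem coeff_seqPoly (k n : ℕ) :
    (seqPoly S k).coeff n = if n ≠ 0 ∧ n ≤ k then S n else 0 := by
  induction k with
  | zero => simp [seqPoly]
  | succ k ih =>
    rw [seqPoly_succ, coeff_add, ih, coeff_C_mul_X_pow]
    split_ifs <;> first | omega | simp_all

theorem degree_det_rowSpace [Nontrivial R] (k : ℕ) :
    (Matrix.of ![![X ^ (k + 1), 0], ![-seqPoly S k, 1]]).det.degree = ↑(k + 1) := by
  simp [Matrix.det_fin_two]

theorem mem_rowSpace_iff : f ∈ rowSpace S k ↔ X ^ (k + 1) ∣ f 0 + f 1 * seqPoly S k := by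
  rw [rowSpace, Submodule.mem_span_pair]
  constructor
  · rintro ⟨a, b, rfl⟩
    refine ⟨a, ?_⟩
    simp only [Pi.add_apply, Pi.smul_apply, Matrix.cons_val_zero, Matrix.cons_val_one, smul_eq_mul]
    ring
  · rintro ⟨c, hc⟩
    refine ⟨c, f 1, funext (Fin.forall_fin_two.2 ⟨?_, ?_⟩)⟩
    · simp only [Pi.add_apply, Pi.smul_apply, Matrix.cons_val_zero, smul_eq_mul]
      linear_combination -hc
    · simp only [Pi.add_apply, Pi.smul_apply, Matrix.cons_val_one, Matrix.cons_val_fin_one,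
        smul_eq_mul]
      ring

theorem errVal_zero_eq_coeff (k : ℕ) (f : Fin 2 → R[X]) :
    errVal S k f 0 = (f 0 + f 1 * seqPoly S k).coeff k := by
  rw [errVal, coeff_add]
  congr 1
  · simp only [zero_add, mul_ite, mul_one, mul_zero, Finset.sum_ite_eq', mem_support_iff]
    exact ite_eq_left_iff.2 fun h => (not_not.1 h).symm
  · conv_rhs => rw [as_sum_support_C_mul_X_pow (f 1), Finset.sum_mul, finsetSum_coeff]
    refine Finset.sum_congr rfl fun i _ => ?_
    rw [mul_assoc, coeff_C_mul, coeff_X_pow_mul', coeff_seqPoly, zero_add]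
    split_ifs <;> first | rfl | omega

theorem mem_rowSpace_succ_iff :
    f ∈ rowSpace S (k + 1) ↔ f ∈ rowSpace S k ∧ errVal S (k + 1) f 0 = 0 := by
  have hlow : ∀ d < k + 1, (f 0 + f 1 * seqPoly S (k + 1)).coeff d =
      (f 0 + f 1 * seqPoly S k).coeff d := by
    intro d hd
    rw [seqPoly_succ, mul_add, ← add_assoc, coeff_add, ← mul_assoc, coeff_mul_X_pow',
      if_neg (by omega), add_zero]
  rw [mem_rowSpace_iff, mem_rowSpace_iff, errVal_zero_eq_coeff, X_pow_dvd_iff, X_pow_dvd_iff,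
    Nat.forall_lt_succ_right]
  exact and_congr_left' (forall₂_congr fun d hd => by rw [hlow d hd])

theorem X_smul_mem_rowSpace_succ (hf : f ∈ rowSpace S k) :
    (X : R[X]) • f ∈ rowSpace S (k + 1) := by
  rw [mem_rowSpace_iff] at hf ⊢
  have hX : (X : R[X]) • f 0 + (X : R[X]) • f 1 * seqPoly S (k + 1) =
      X * (f 0 + f 1 * seqPoly S k + f 1 * C (S (k + 1)) * X ^ (k + 1)) := by
    rw [seqPoly_succ, smul_eq_mul, smul_eq_mul]
    ring
  rw [Pi.smul_apply, Pi.smul_apply, hX, pow_succ']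
  exact mul_dvd_mul_left X (dvd_add hf (dvd_mul_left _ _))

theorem errVal_C_smul_add (k : ℕ) (a b : R) (f h : Fin 2 → R[X]) :
    errVal S k (C a • f + C b • h) 0 = a * errVal S k f 0 + b * errVal S k h 0 := by
  simp only [errVal_zero_eq_coeff, Pi.add_apply, Pi.smul_apply, smul_eq_mul]
  rw [show C a * f 0 + C b * h 0 + (C a * f 1 + C b * h 1) * seqPoly S k =
      C a * (f 0 + f 1 * seqPoly S k) + C b * (h 0 + h 1 * seqPoly S k) by ring,
    coeff_add, coeff_C_mul, coeff_C_mul]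

theorem combination_mem_rowSpace_succ (hf : f ∈ rowSpace S k) (hh : h ∈ rowSpace S k) :
    C (-errVal S (k + 1) h 0) • f + C (errVal S (k + 1) f 0) • h ∈ rowSpace S (k + 1) := by
  refine (mem_rowSpace_succ_iff S).2 ⟨add_mem (Submodule.smul_mem _ _ hf)
    (Submodule.smul_mem _ _ hh), ?_⟩
  rw [errVal_C_smul_add]
  ring

end RowSpace

theorem FieldAlgRun.mem_rowSpace_and_isWeakPopovPair {F : Type*} [Field F] {S : ℕ → F} {N : ℕ}
    {g : ℕ → Fin 2 → Fin 2 → F[X]} (hrun : FieldAlgRun S N g) {k : ℕ} (hk : k ≤ N) :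
    g k 0 ∈ rowSpace S k ∧ g k 1 ∈ rowSpace S k ∧
      IsWeakPopovPair (k + 1) (g k 0) (g k 1) := by
  obtain ⟨hg₀, hg₁, hstep⟩ := hrun
  induction k with
  | zero =>
    refine ⟨hg₀ ▸ Submodule.subset_span (by simp),
      hg₁ ▸ Submodule.subset_span (by simp [seqPoly]), 1, 0, 0, 1, by decide, rfl, ?_, ?_⟩
    · refine hg₀ ▸ vlm_eq_coe_iff.2 ⟨by simp, fun i j hij => ?_⟩
      fin_cases j <;> simp_all [coeff_X]
    · refine hg₁ ▸ vlm_eq_coe_iff.2 ⟨by simp, fun i j hij => ?_⟩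
      fin_cases j <;> simp_all [coeff_one]
  | succ k ih =>
    obtain ⟨hmem₀, hmem₁, hpopov⟩ := ih (by omega)
    obtain ⟨istar, hΔ, hmin, hrow₀, hrow₁⟩ := hstep (k + 1) (by omega) hk
    simp only [Nat.add_sub_cancel] at hΔ hmin hrow₀ hrow₁
    have hmem : ∀ i, g k i ∈ rowSpace S k := Fin.forall_fin_two.2 ⟨hmem₀, hmem₁⟩
    refine ⟨?_, hrow₁ ▸ combination_mem_rowSpace_succ S hmem₀ hmem₁, ?_⟩
    · rw [hrow₀, mul_smul]
      exact Submodule.smul_mem _ _ (X_smul_mem_rowSpace_succ S (hmem istar))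
    · rw [hrow₀, hrow₁]
      obtain rfl | rfl : istar = 0 ∨ istar = 1 := by omega
      · exact hpopov.step (inv_ne_zero hΔ) hΔ fun ha => hmin 1 (neg_ne_zero.1 ha)
      · rw [add_comm (C _ • _)]
        exact hpopov.symm.step (inv_ne_zero hΔ) (neg_ne_zero.2 hΔ) fun ha => hmin 0 ha

/-- For every `k`, the rows of the matrix `R^k` produced by the field algorithm form a minimal
Gröbner basis (top ordering) of the row space of `[[x^(k+1), 0], [-(S_k x^k + ⋯ + S_1 x), 1]]`. -/
theorem field_algorithm_minimal_groebner {F : Type*} [Field F] (S : ℕ → F) (N : ℕ)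
    (g : ℕ → Fin 2 → Fin 2 → Polynomial F) (hrun : FieldAlgRun S N g) :
    ∀ k ≤ N,
      IsMinimalGroebner
        (Submodule.span (Polynomial F)
          ({![X ^ (k + 1), 0],
            ![-(∑ i ∈ Finset.range k, C (S (i + 1)) * X ^ (i + 1)), 1]} :
            Set (Fin 2 → Polynomial F)))
        ({g k 0, g k 1} : Finset (Fin 2 → Polynomial F)) := by
  intro k hk
  obtain ⟨hmem₀, hmem₁, hpopov⟩ := hrun.mem_rowSpace_and_isWeakPopovPair hk
  have hspan := hpopov.span_eq (degree_det_rowSpace S k) hmem₀ hmem₁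
  exact hspan ▸ hpopov.isMinimalGroebner
end
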